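/- Assume λ < L_g. Then for every n = 0,…,μ and every a ∈ I_h, the map x ↦ u_T^h(n,x,a) is Lipschitz continuous with constant (L_f/(L_g − λ))·e^{(L_g − λ)(T − nh)}: for all x, y ∈ ℝ^ν, |u_T^h(n,x,a) − u_T^h(n,y,a)| ≤ (L_f/(L_g − λ))·e^{(L_g − λ)(T − nh)}·‖x − y‖. -/

import Mathlib

noncomputable section

abbrev E (ν : ℕ) := EuclideanSpace ℝ (Fin ν)

/-- The discrete set of control values `I_h = {i·h : i = 0,…,N}`. -/
def Ih (h : ℝ) (N : ℕ) : Set ℝ := {r : ℝ | ∃ i : ℕ, i ≤ N ∧ r = i * h}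

/-- The discrete dynamic programming operator
`(A^h w)(x,a) = min_{b ∈ I_h, b ≥ a} [(1−λh)·w(x + h·g(x,a), b) + h·f(x,a)]`. -/
def Aop {ν : ℕ} (lam h : ℝ) (N : ℕ)
    (g : E ν → ℝ → E ν) (f : E ν → ℝ → ℝ)
    (w : E ν → ℝ → ℝ) (x : E ν) (a : ℝ) : ℝ :=
  sInf {v : ℝ | ∃ b ∈ Ih h N, a ≤ b ∧
    v = (1 - lam * h) * w (x + h • g x a) b + h * f x a}

/-!
Write `c = L_g − λ` and `K = L_f / c`. One step of the scheme multiplies a Lipschitz constant `C`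
of `u(n+1, ·, b)` by `(1 − λh)(1 + L_g h) ≤ 1 + ch` and adds `L_f h`, because a minimum over a
common finite set of controls is 1-Lipschitz for the sup-distance of the minimised families.
Starting from `0` at `n = μ`, the constants stay below `K (e^{c(μ−n)h} − 1)`, since
`(1 + ch) K (e^{cs} − 1) + K c h ≤ K (e^{c(s+h)} − 1)` by `1 + ch ≤ e^{ch}`.
-/

lemma sInf_image_le_sInf_image_add {ι : Type*} {s : Set ι} (hs : s.Finite) (hne : s.Nonempty)
    {F G : ι → ℝ} {D : ℝ} (hFG : ∀ i ∈ s, F i ≤ G i + D) :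
    sInf (F '' s) ≤ sInf (G '' s) + D := by
  obtain ⟨i, hi, hGi⟩ := (hne.image G).csInf_mem (hs.image G)
  calc sInf (F '' s) ≤ F i := csInf_le (hs.image F).bddBelow ⟨i, hi, rfl⟩
    _ ≤ G i + D := hFG i hi
    _ = sInf (G '' s) + D := by rw [hGi]

lemma abs_sInf_image_sub_le {ι : Type*} {s : Set ι} (hs : s.Finite) (hne : s.Nonempty)
    {F G : ι → ℝ} {D : ℝ} (hFG : ∀ i ∈ s, |F i - G i| ≤ D) :
    |sInf (F '' s) - sInf (G '' s)| ≤ D := by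
  refine abs_sub_le_iff.2 ⟨sub_le_iff_le_add'.2 ?_, sub_le_iff_le_add'.2 ?_⟩
  · exact sInf_image_le_sInf_image_add hs hne fun i hi => by
      linarith [(abs_sub_le_iff.1 (hFG i hi)).1]
  · exact sInf_image_le_sInf_image_add hs hne fun i hi => by
      linarith [(abs_sub_le_iff.1 (hFG i hi)).2]

lemma Ih_finite (h : ℝ) (N : ℕ) : (Ih h N).Finite :=
  ((Set.finite_Iic N).image fun i : ℕ => (i : ℝ) * h).subset fun _ ⟨i, hi, hr⟩ => ⟨i, hi, hr.symm⟩

lemma Ih_subset_Icc {h : ℝ} {N : ℕ} (hh : 0 ≤ h) (hNh : (N : ℝ) * h = 1) :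
    Ih h N ⊆ Set.Icc 0 1 := by
  rintro _ ⟨i, hi, rfl⟩
  refine ⟨by positivity, hNh ▸ ?_⟩
  gcongr

lemma Aop_eq_sInf_image {ν : ℕ} (lam h : ℝ) (N : ℕ) (g : E ν → ℝ → E ν) (f : E ν → ℝ → ℝ)
    (w : E ν → ℝ → ℝ) (x : E ν) (a : ℝ) :
    Aop lam h N g f w x a =
      sInf ((fun b => (1 - lam * h) * w (x + h • g x a) b + h * f x a) ''
        {b ∈ Ih h N | a ≤ b}) := by
  unfold Aop
  congr 1
  ext v
  constructor
  · rintro ⟨b, hb, hab, rfl⟩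
    exact ⟨b, ⟨hb, hab⟩, rfl⟩
  · rintro ⟨b, ⟨hb, hab⟩, rfl⟩
    exact ⟨b, hb, hab, rfl⟩

lemma norm_add_smul_sub_add_smul_le {ν : ℕ} {G : E ν → E ν} {L h : ℝ} (hh : 0 ≤ h)
    (hG : ∀ x y, ‖G x - G y‖ ≤ L * ‖x - y‖) (x y : E ν) :
    ‖(x + h • G x) - (y + h • G y)‖ ≤ (1 + L * h) * ‖x - y‖ :=
  calc ‖(x + h • G x) - (y + h • G y)‖ = ‖(x - y) + h • (G x - G y)‖ := by
        rw [smul_sub]; abel_nf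
    _ ≤ ‖x - y‖ + h * ‖G x - G y‖ := by
        grw [norm_add_le, norm_smul, Real.norm_of_nonneg hh]
    _ ≤ ‖x - y‖ + h * (L * ‖x - y‖) := by grw [hG]
    _ = (1 + L * h) * ‖x - y‖ := by ring

lemma abs_Aop_sub_le {ν : ℕ} {lam h : ℝ} {N : ℕ} {g : E ν → ℝ → E ν} {f : E ν → ℝ → ℝ}
    {w : E ν → ℝ → ℝ} {a C Lg Lf : ℝ} (ha : a ∈ Ih h N) (hh : 0 ≤ h) (hlh : 0 ≤ 1 - lam * h)
    (hC : 0 ≤ C) (hw : ∀ b ∈ Ih h N, ∀ x y, |w x b - w y b| ≤ C * ‖x - y‖)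
    (hg : ∀ x y, ‖g x a - g y a‖ ≤ Lg * ‖x - y‖) (hf : ∀ x y, |f x a - f y a| ≤ Lf * ‖x - y‖)
    (x y : E ν) :
    |Aop lam h N g f w x a - Aop lam h N g f w y a| ≤
      ((1 - lam * h) * (1 + Lg * h) * C + Lf * h) * ‖x - y‖ := by
  rw [Aop_eq_sInf_image, Aop_eq_sInf_image]
  refine abs_sInf_image_sub_le ((Ih_finite h N).subset fun _ hb => hb.1)
    (⟨a, ha, le_rfl⟩ : {b ∈ Ih h N | a ≤ b}.Nonempty) ?_
  rintro b ⟨hb, -⟩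
  have hwb := (hw b hb _ _).trans
    (mul_le_mul_of_nonneg_left (norm_add_smul_sub_add_smul_le hh hg x y) hC)
  calc |(1 - lam * h) * w (x + h • g x a) b + h * f x a
        - ((1 - lam * h) * w (y + h • g y a) b + h * f y a)|
      = |(1 - lam * h) * (w (x + h • g x a) b - w (y + h • g y a) b)
          + h * (f x a - f y a)| := by ring_nf
    _ ≤ (1 - lam * h) * |w (x + h • g x a) b - w (y + h • g y a) b|
          + h * |f x a - f y a| := by
        grw [abs_add_le, abs_mul, abs_mul, abs_of_nonneg hlh, abs_of_nonneg hh]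
    _ ≤ (1 - lam * h) * (C * ((1 + Lg * h) * ‖x - y‖)) + h * (Lf * ‖x - y‖) := by
        grw [hwb, hf]
    _ = ((1 - lam * h) * (1 + Lg * h) * C + Lf * h) * ‖x - y‖ := by ring

lemma one_sub_mul_one_add_mul_le {lam L h : ℝ} (hlam : 0 ≤ lam) (hL : 0 ≤ L) (hh : 0 ≤ h) :
    (1 - lam * h) * (1 + L * h) ≤ 1 + (L - lam) * h := by
  nlinarith [mul_nonneg (mul_nonneg hlam hL) (mul_nonneg hh hh)]

lemma mul_exp_sub_one_add_le {K c h q s : ℝ} (hK : 0 ≤ K) (hcs : 0 ≤ c * s)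
    (hq : q ≤ 1 + c * h) :
    q * (K * (Real.exp (c * s) - 1)) + K * c * h ≤ K * (Real.exp (c * (s + h)) - 1) := by
  have hX : 0 ≤ K * (Real.exp (c * s) - 1) :=
    mul_nonneg hK (sub_nonneg.2 (Real.one_le_exp hcs))
  have hexp : Real.exp (c * s) * (1 + c * h) ≤ Real.exp (c * (s + h)) := by
    rw [mul_add c s h, Real.exp_add]
    gcongr
    linarith [Real.add_one_le_exp (c * h)]
  calc q * (K * (Real.exp (c * s) - 1)) + K * c * h
      ≤ (1 + c * h) * (K * (Real.exp (c * s) - 1)) + K * c * h := by gcongr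
    _ = K * (Real.exp (c * s) * (1 + c * h) - 1) := by ring
    _ ≤ K * (Real.exp (c * (s + h)) - 1) := by gcongr

lemma abs_sub_le_of_backward_recursion {ν : ℕ} {lam h : ℝ} {N : ℕ} {g : E ν → ℝ → E ν}
    {f : E ν → ℝ → ℝ} {Lg Lf : ℝ} {μ : ℕ} {u : ℕ → E ν → ℝ → ℝ}
    (hlam : 0 ≤ lam) (hh : 0 ≤ h) (hlh : 0 ≤ 1 - lam * h) (hLf : 0 ≤ Lf) (hgt : lam < Lg)
    (hg : ∀ a ∈ Ih h N, ∀ x y, ‖g x a - g y a‖ ≤ Lg * ‖x - y‖)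
    (hf : ∀ a ∈ Ih h N, ∀ x y, |f x a - f y a| ≤ Lf * ‖x - y‖)
    (hμ : ∀ x a, u μ x a = 0)
    (hrec : ∀ n : ℕ, 1 ≤ n → n ≤ μ → ∀ x a, u (n - 1) x a = Aop lam h N g f (u n) x a) :
    ∀ k ≤ μ, ∀ a ∈ Ih h N, ∀ x y,
      |u (μ - k) x a - u (μ - k) y a| ≤
        Lf / (Lg - lam) * (Real.exp ((Lg - lam) * (k * h)) - 1) * ‖x - y‖ := by
  have hc : 0 < Lg - lam := sub_pos.2 hgt
  have hK : 0 ≤ Lf / (Lg - lam) := div_nonneg hLf hc.le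
  intro k
  induction k with
  | zero => intro _ a _ x y; simp [hμ]
  | succ k ih =>
    intro hk a ha x y
    have hcs : 0 ≤ (Lg - lam) * (k * h) := by positivity
    rw [show μ - (k + 1) = μ - k - 1 by omega]
    simp only [hrec (μ - k) (by omega) (Nat.sub_le μ k)]
    refine (abs_Aop_sub_le ha hh hlh (mul_nonneg hK (sub_nonneg.2 (Real.one_le_exp hcs)))
      (ih (by omega)) (hg a ha) (hf a ha) x y).trans (mul_le_mul_of_nonneg_right ?_ (norm_nonneg _))
    have hstep := mul_exp_sub_one_add_le hK hcs
      (one_sub_mul_one_add_mul_le hlam (hlam.trans hgt.le) hh)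
    rw [div_mul_cancel₀ Lf hc.ne'] at hstep
    rwa [Nat.cast_succ, add_one_mul]

theorem scheme_lipschitz_supercritical_general {ν : ℕ}
    (lam h : ℝ) (hlam : 0 < lam) (hh : 0 < h) (hhl : h < 1 / lam)
    (N : ℕ) (hNh : (N : ℝ) * h = 1)
    (g : E ν → ℝ → E ν) (f : E ν → ℝ → ℝ)
    (Lg Lf : ℝ) (hLf : 0 < Lf)
    (hgLip : ∀ x x' : E ν, ∀ a ∈ Set.Icc (0:ℝ) 1, ∀ a' ∈ Set.Icc (0:ℝ) 1,
      ‖g x a - g x' a'‖ ≤ Lg * (‖x - x'‖ + |a - a'|))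
    (hfLip : ∀ x x' : E ν, ∀ a ∈ Set.Icc (0:ℝ) 1, ∀ a' ∈ Set.Icc (0:ℝ) 1,
      |f x a - f x' a'| ≤ Lf * (‖x - x'‖ + |a - a'|))
    (hgt : lam < Lg)
    (μ : ℕ) (T : ℝ) (hT : T = μ * h)
    (uT : ℕ → E ν → ℝ → ℝ)
    (huTμ : ∀ (x : E ν) (a : ℝ), uT μ x a = 0)
    (huTrec : ∀ n : ℕ, 1 ≤ n → n ≤ μ → ∀ (x : E ν) (a : ℝ),
      uT (n - 1) x a = Aop lam h N g f (uT n) x a) :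
    ∀ n : ℕ, n ≤ μ → ∀ a ∈ Ih h N, ∀ x y : E ν,
      |uT n x a - uT n y a| ≤
        (Lf / (Lg - lam)) * Real.exp ((Lg - lam) * (T - n * h)) * ‖x - y‖ := by
  have hlh : 0 ≤ 1 - lam * h := by
    rw [lt_div_iff₀ hlam] at hhl
    linarith
  have hIcc := Ih_subset_Icc hh.le hNh
  have hg : ∀ a ∈ Ih h N, ∀ x y, ‖g x a - g y a‖ ≤ Lg * ‖x - y‖ := fun a ha x y => by
    simpa using hgLip x y a (hIcc ha) a (hIcc ha)
  have hf : ∀ a ∈ Ih h N, ∀ x y, |f x a - f y a| ≤ Lf * ‖x - y‖ := fun a ha x y => by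
    simpa using hfLip x y a (hIcc ha) a (hIcc ha)
  intro n hn a ha x y
  have hbound := abs_sub_le_of_backward_recursion hlam.le hh.le hlh hLf.le hgt hg hf huTμ huTrec
    (μ - n) (Nat.sub_le μ n) a ha x y
  rw [Nat.sub_sub_self hn, Nat.cast_sub hn] at hbound
  refine hbound.trans (mul_le_mul_of_nonneg_right ?_ (norm_nonneg _))
  have hTn : T - n * h = (μ - n : ℝ) * h := by rw [hT]; ring
  rw [hTn]
  exact mul_le_mul_of_nonneg_left (sub_le_self _ zero_le_one)
    (div_nonneg hLf.le (sub_pos.2 hgt).le)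

theorem scheme_lipschitz_supercritical {ν : ℕ} (hν : 1 ≤ ν)
    (lam h : ℝ) (hlam : 0 < lam) (hh : 0 < h) (hhl : h < 1 / lam)
    (N : ℕ) (hN : 0 < N) (hNh : (N : ℝ) * h = 1)
    (g : E ν → ℝ → E ν) (f : E ν → ℝ → ℝ)
    (Lg Mg Lf Mf : ℝ) (hLg : 0 < Lg) (hMg : 0 < Mg) (hLf : 0 < Lf) (hMf : 0 < Mf)
    (hgLip : ∀ x x' : E ν, ∀ a ∈ Set.Icc (0:ℝ) 1, ∀ a' ∈ Set.Icc (0:ℝ) 1,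
      ‖g x a - g x' a'‖ ≤ Lg * (‖x - x'‖ + |a - a'|))
    (hgBdd : ∀ x : E ν, ∀ a ∈ Set.Icc (0:ℝ) 1, ‖g x a‖ ≤ Mg)
    (hfLip : ∀ x x' : E ν, ∀ a ∈ Set.Icc (0:ℝ) 1, ∀ a' ∈ Set.Icc (0:ℝ) 1,
      |f x a - f x' a'| ≤ Lf * (‖x - x'‖ + |a - a'|))
    (hfBdd : ∀ x : E ν, ∀ a ∈ Set.Icc (0:ℝ) 1, |f x a| ≤ Mf)
    (hgt : lam < Lg)
    (μ : ℕ) (hμ : 0 < μ) (T : ℝ) (hT : T = μ * h)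
    (uT : ℕ → E ν → ℝ → ℝ)
    (huTμ : ∀ (x : E ν) (a : ℝ), uT μ x a = 0)
    (huTrec : ∀ n : ℕ, 1 ≤ n → n ≤ μ → ∀ (x : E ν) (a : ℝ),
      uT (n - 1) x a = Aop lam h N g f (uT n) x a) :
    ∀ n : ℕ, n ≤ μ → ∀ a ∈ Ih h N, ∀ x y : E ν,
      |uT n x a - uT n y a| ≤
        (Lf / (Lg - lam)) * Real.exp ((Lg - lam) * (T - n * h)) * ‖x - y‖ :=
  scheme_lipschitz_supercritical_general lam h hlam hh hhl N hNh g f Lg Lf hLf hgLip hfLip hgt μ T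
    hT uT huTμ huTrec
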